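/- Let γ^o ∈ ℝ^s with all entries nonzero, γ_min := min_j |γ_j^o|, and let γ ∈ ℝ^s, ρ ∈ ∂‖γ‖₁. Then ‖γ^o‖₁ − ⟨γ^o, ρ⟩ ≤ 2 Σ_{j: sign(γ_j) ≠ sign(γ_j^o)} |γ_j^o|, and this quantity is bounded above by min( (2/γ_min)‖γ − γ^o‖₂², 2√(s‖γ − γ^o‖₂²) ). In particular, if ‖γ − γ^o‖₂ < γ_min then ‖γ^o‖₁ − ⟨γ^o, ρ⟩ = 0. -/
import Mathlib

open Matrix
open scoped Classical

/-- `ρ ∈ ∂‖γ‖₁`. -/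
def IsL1Subgradient {s : ℕ} (ρ γ : Fin s → ℝ) : Prop :=
  ∀ j, (γ j ≠ 0 → ρ j = Real.sign (γ j)) ∧ |ρ j| ≤ 1

private lemma sign_key {a b : ℝ} (hb : b ≠ 0) (h : Real.sign a ≠ Real.sign b) :
    |b| ≤ |a - b| := by
  rcases eq_or_ne a 0 with rfl | ha
  · simp
  have hab : a * b < 0 := by
    rcases ha.lt_or_gt with ha' | ha' <;> rcases hb.lt_or_gt with hb' | hb'
    · exact absurd (by rw [Real.sign_of_neg ha', Real.sign_of_neg hb']) h
    · exact mul_neg_of_neg_of_pos ha' hb'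
    · exact mul_neg_of_pos_of_neg ha' hb'
    · exact absurd (by rw [Real.sign_of_pos ha', Real.sign_of_pos hb']) h
  have h2 : b ^ 2 ≤ (a - b) ^ 2 := by nlinarith
  calc |b| = Real.sqrt (b ^ 2) := (Real.sqrt_sq_eq_abs b).symm
    _ ≤ Real.sqrt ((a - b) ^ 2) := Real.sqrt_le_sqrt h2
    _ = |a - b| := Real.sqrt_sq_eq_abs _

/-- Bound on `‖γ^o‖₁ − ⟨γ^o, ρ⟩` for `ρ ∈ ∂‖γ‖₁` via the sign-disagreement set,
together with the `ℓ₂` bounds, and vanishing when `‖γ − γ^o‖₂ < γ_min`. -/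
theorem bregman_sign_disagreement_bound {s : ℕ}
    (γo γ ρ : Fin s → ℝ) (hγo : ∀ j, γo j ≠ 0)
    (γmin : ℝ) (hγmin : IsLeast (Set.range fun j => |γo j|) γmin)
    (hρ : IsL1Subgradient ρ γ) :
    ((∑ j, |γo j|) - γo ⬝ᵥ ρ ≤
        2 * ∑ j ∈ Finset.univ.filter (fun j => Real.sign (γ j) ≠ Real.sign (γo j)), |γo j|) ∧
    (2 * (∑ j ∈ Finset.univ.filter (fun j => Real.sign (γ j) ≠ Real.sign (γo j)), |γo j|) ≤
        min ((2 / γmin) * ∑ j, (γ j - γo j) ^ 2)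
          (2 * Real.sqrt (s * ∑ j, (γ j - γo j) ^ 2))) ∧
    (Real.sqrt (∑ j, (γ j - γo j) ^ 2) < γmin → (∑ j, |γo j|) - γo ⬝ᵥ ρ = 0) := by
  set D := Finset.univ.filter (fun j => Real.sign (γ j) ≠ Real.sign (γo j)) with hD
  have hγmin_pos : 0 < γmin := by
    obtain ⟨j0, hj0⟩ := hγmin.1
    rw [← hj0]; exact abs_pos.mpr (hγo j0)
  have habs : ∀ j, |γo j * ρ j| ≤ |γo j| := by
    intro j
    rw [abs_mul]
    calc |γo j| * |ρ j| ≤ |γo j| * 1 := by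
          exact mul_le_mul_of_nonneg_left (hρ j).2 (abs_nonneg _)
      _ = |γo j| := mul_one _
  -- key: disagreement implies |γo j| ≤ |γ j - γo j|
  have hkey : ∀ j ∈ D, |γo j| ≤ |γ j - γo j| := by
    intro j hj
    rw [hD, Finset.mem_filter] at hj
    exact sign_key (hγo j) hj.2
  have hQnn : (0:ℝ) ≤ ∑ j, (γ j - γo j) ^ 2 := Finset.sum_nonneg fun j _ => sq_nonneg _
  -- Part 1
  have part1 : (∑ j, |γo j|) - γo ⬝ᵥ ρ ≤ 2 * ∑ j ∈ D, |γo j| := by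
    have hdot : γo ⬝ᵥ ρ = ∑ j, γo j * ρ j := rfl
    rw [hdot, ← Finset.sum_sub_distrib]
    have hsplit : ∑ j, (|γo j| - γo j * ρ j)
        = ∑ j ∈ D, (|γo j| - γo j * ρ j) + ∑ j ∈ Dᶜ, (|γo j| - γo j * ρ j) :=
      (Finset.sum_add_sum_compl D _).symm
    have hzero : ∑ j ∈ Dᶜ, (|γo j| - γo j * ρ j) = 0 := by
      apply Finset.sum_eq_zero
      intro j hj
      rw [Finset.mem_compl, hD, Finset.mem_filter] at hj
      have hsgn : Real.sign (γ j) = Real.sign (γo j) := by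
        by_contra h; exact hj ⟨Finset.mem_univ j, h⟩
      have hγj : γ j ≠ 0 := by
        intro h0
        rw [h0, Real.sign_zero] at hsgn
        rcases (hγo j).lt_or_gt with h' | h'
        · rw [Real.sign_of_neg h'] at hsgn; norm_num at hsgn
        · rw [Real.sign_of_pos h'] at hsgn; norm_num at hsgn
      rw [(hρ j).1 hγj, hsgn]
      rcases (hγo j).lt_or_gt with h' | h'
      · rw [Real.sign_of_neg h', abs_of_neg h']; ring
      · rw [Real.sign_of_pos h', abs_of_pos h']; ring
    rw [hsplit, hzero, add_zero, Finset.mul_sum]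
    apply Finset.sum_le_sum
    intro j _
    have := habs j
    have := neg_abs_le (γo j * ρ j)
    linarith [abs_nonneg (γo j)]
  refine ⟨part1, ?_, ?_⟩
  · apply le_min
    · -- 2T ≤ (2/γmin) Q
      have h1 : γmin * ∑ j ∈ D, |γo j| ≤ ∑ j, (γ j - γo j) ^ 2 := by
        calc γmin * ∑ j ∈ D, |γo j| = ∑ j ∈ D, γmin * |γo j| := Finset.mul_sum _ _ _
          _ ≤ ∑ j ∈ D, (γ j - γo j) ^ 2 := by
              apply Finset.sum_le_sum
              intro j hj
              have h2 : γmin ≤ |γo j| := hγmin.2 ⟨j, rfl⟩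
              have h3 := hkey j hj
              calc γmin * |γo j| ≤ |γo j| * |γo j| :=
                    mul_le_mul_of_nonneg_right h2 (abs_nonneg _)
                _ ≤ |γ j - γo j| * |γ j - γo j| :=
                    mul_le_mul h3 h3 (abs_nonneg _) (abs_nonneg _)
                _ = (γ j - γo j) ^ 2 := by rw [abs_mul_abs_self]; ring
          _ ≤ ∑ j, (γ j - γo j) ^ 2 :=
              Finset.sum_le_sum_of_subset_of_nonneg (Finset.subset_univ D)
                (fun j _ _ => sq_nonneg _)
      rw [div_mul_eq_mul_div, le_div_iff₀ hγmin_pos]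
      nlinarith [Finset.sum_nonneg (fun j (_ : j ∈ D) => abs_nonneg (γo j))]
    · -- 2T ≤ 2√(sQ)
      have h1 : ∑ j ∈ D, |γo j| ≤ ∑ j, |γ j - γo j| := by
        calc ∑ j ∈ D, |γo j| ≤ ∑ j ∈ D, |γ j - γo j| := Finset.sum_le_sum hkey
          _ ≤ ∑ j, |γ j - γo j| :=
            Finset.sum_le_sum_of_subset_of_nonneg (Finset.subset_univ D)
              (fun j _ _ => abs_nonneg _)
      have h2 : (∑ j, |γ j - γo j|) ^ 2 ≤ s * ∑ j, (γ j - γo j) ^ 2 := by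
        have := sq_sum_le_card_mul_sum_sq (s := (Finset.univ : Finset (Fin s)))
          (f := fun j => |γ j - γo j|)
        simpa [sq_abs] using this
      have h3 : ∑ j, |γ j - γo j| ≤ Real.sqrt (s * ∑ j, (γ j - γo j) ^ 2) := by
        rw [Real.le_sqrt (Finset.sum_nonneg fun j _ => abs_nonneg _)]
        · exact h2
        · exact mul_nonneg (Nat.cast_nonneg _) hQnn
      linarith
  · -- Part 3
    intro hlt
    have hDempty : ∑ j ∈ D, |γo j| = 0 := by
      apply Finset.sum_eq_zero
      intro j hj
      exfalso
      have h3 := hkey j hj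
      have h4 : (γ j - γo j) ^ 2 ≤ ∑ i, (γ i - γo i) ^ 2 :=
        Finset.single_le_sum (f := fun i => (γ i - γo i) ^ 2) (fun i _ => sq_nonneg _) (Finset.mem_univ j)
      have h5 : |γ j - γo j| ≤ Real.sqrt (∑ i, (γ i - γo i) ^ 2) := by
        rw [← Real.sqrt_sq_eq_abs]
        exact Real.sqrt_le_sqrt h4
      have h6 : γmin ≤ |γo j| := hγmin.2 ⟨j, rfl⟩
      linarith
    have hge : γo ⬝ᵥ ρ ≤ ∑ j, |γo j| := by
      have : γo ⬝ᵥ ρ = ∑ j, γo j * ρ j := rfl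
      rw [this]
      exact Finset.sum_le_sum fun j _ => (le_abs_self _).trans (habs j)
    rw [hDempty, mul_zero] at part1
    linarith
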